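/- Let A : ℝ^{m×n} → ℝ^p satisfy the rank-RIP with constant δ_k, and let S₁, S₂ be sets of orthonormal rank-1 matrices such that rank(P_{S₁∪S₂} X) ≤ k for all X ∈ ℝ^{m×n}. Then for every X ∈ span(S₂), ‖P_{S₁} A* A P_{S₁⊥} X‖_F ≤ δ_k ‖P_{S₁⊥} X‖_F. -/

import Mathlib

/-!
Put `Z = X - P₁ X` and `Y = P₁ A* A Z`. Both lie in the range of `Q`, a subspace of rank-`≤ k`
matrices on which `A` is a `δ`-restricted isometry, and `Y ⊥ Z` because `P₁` is an orthogonal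
projection. By polarization a restricted isometry nearly preserves orthogonality,
`⟪A Y, A Z⟫ ≤ δ ‖Y‖ ‖Z‖`, while `⟪A Y, A Z⟫ = ⟪Y, A* A Z⟫ = ‖Y‖²`; hence `‖Y‖ ≤ δ ‖Z‖`.
Matrices are identified with `EuclideanSpace ℝ (Fin m × Fin n)`, where `frobInner` is the inner
product, so that the polarization argument runs in a genuine inner product space.
-/

open scoped BigOperators

noncomputable def frobInner {m n : ℕ} (X Y : Matrix (Fin m) (Fin n) ℝ) : ℝ :=
  ∑ i, ∑ j, X i j * Y i j

noncomputable def frobNorm {m n : ℕ} (X : Matrix (Fin m) (Fin n) ℝ) : ℝ :=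
  Real.sqrt (frobInner X X)

open RealInnerProductSpace

section RestrictedIsometry

variable {E F : Type*} [NormedAddCommGroup E] [InnerProductSpace ℝ E]
  [NormedAddCommGroup F] [InnerProductSpace ℝ F]

def RestrictedIsometryOn (T : E →ₗ[ℝ] F) (S : Submodule ℝ E) (δ : ℝ) : Prop :=
  ∀ x ∈ S, (1 - δ) * ‖x‖ ^ 2 ≤ ‖T x‖ ^ 2 ∧ ‖T x‖ ^ 2 ≤ (1 + δ) * ‖x‖ ^ 2

namespace RestrictedIsometryOn

variable {T : E →ₗ[ℝ] F} {S : Submodule ℝ E} {δ : ℝ}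

theorem nonneg (h : RestrictedIsometryOn T S δ) {x : E} (hx : x ∈ S) (hx₀ : x ≠ 0) :
    0 ≤ δ := by
  obtain ⟨hlo, hhi⟩ := h x hx
  have : 0 < ‖x‖ ^ 2 := by positivity
  nlinarith

theorem inner_le_of_orthonormal (h : RestrictedIsometryOn T S δ) {x y : E} (hx : x ∈ S)
    (hy : y ∈ S) (hx₁ : ‖x‖ = 1) (hy₁ : ‖y‖ = 1) (hxy : ⟪x, y⟫ = 0) :
    ⟪T x, T y⟫ ≤ δ := by
  have hadd : ‖x + y‖ ^ 2 = 2 := by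
    rw [norm_add_sq_real, hx₁, hy₁, hxy]; norm_num
  have hsub : ‖x - y‖ ^ 2 = 2 := by
    rw [norm_sub_sq_real, hx₁, hy₁, hxy]; norm_num
  have hpol : ‖T (x + y)‖ ^ 2 - ‖T (x - y)‖ ^ 2 = 4 * ⟪T x, T y⟫ := by
    rw [map_add, map_sub, norm_add_sq_real, norm_sub_sq_real]; ring
  have hhi := (h _ (S.add_mem hx hy)).2
  have hlo := (h _ (S.sub_mem hx hy)).1
  rw [hadd] at hhi
  rw [hsub] at hlo
  linarith

theorem inner_le (h : RestrictedIsometryOn T S δ) {x y : E} (hx : x ∈ S) (hy : y ∈ S)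
    (hxy : ⟪x, y⟫ = 0) : ⟪T x, T y⟫ ≤ δ * ‖x‖ * ‖y‖ := by
  rcases eq_or_ne x 0 with rfl | hx₀
  · simp
  rcases eq_or_ne y 0 with rfl | hy₀
  · simp
  have hunit := h.inner_le_of_orthonormal (S.smul_mem ‖x‖⁻¹ hx) (S.smul_mem ‖y‖⁻¹ hy)
    (norm_smul_inv_norm hx₀) (norm_smul_inv_norm hy₀)
    (by rw [real_inner_smul_left, real_inner_smul_right, hxy]; ring)
  rw [map_smul, map_smul, real_inner_smul_left, real_inner_smul_right] at hunit
  calc ⟪T x, T y⟫ = ‖x‖ * ‖y‖ * (‖x‖⁻¹ * (‖y‖⁻¹ * ⟪T x, T y⟫)) := by field_simp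
    _ ≤ ‖x‖ * ‖y‖ * δ := by gcongr
    _ = δ * ‖x‖ * ‖y‖ := by ring

theorem norm_le_of_inner_eq_norm_sq (h : RestrictedIsometryOn T S δ) {x y : E} (hx : x ∈ S)
    (hy : y ∈ S) (hxy : ⟪x, y⟫ = 0) (hTxy : ⟪T x, T y⟫ = ‖x‖ ^ 2) : ‖x‖ ≤ δ * ‖y‖ := by
  rcases eq_or_ne y 0 with rfl | hy₀
  · have hx₀ : x = 0 := by simpa [eq_comm] using hTxy
    simp [hx₀]
  rcases eq_or_ne x 0 with rfl | hx₀
  · simpa using mul_nonneg (h.nonneg hy hy₀) (norm_nonneg y)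
  have hbound := h.inner_le hx hy hxy
  rw [hTxy, sq, mul_comm δ, mul_assoc] at hbound
  exact le_of_mul_le_mul_left hbound (norm_pos_iff.mpr hx₀)

end RestrictedIsometryOn

end RestrictedIsometry

def frobeniusEuclideanEquiv (m n : ℕ) :
    Matrix (Fin m) (Fin n) ℝ ≃ₗ[ℝ] EuclideanSpace ℝ (Fin m × Fin n) :=
  (LinearEquiv.curry ℝ ℝ (Fin m) (Fin n)).symm ≪≫ₗ (WithLp.linearEquiv 2 ℝ _).symm

@[simp]
theorem frobeniusEuclideanEquiv_apply {m n : ℕ} (X : Matrix (Fin m) (Fin n) ℝ) (i : Fin m)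
    (j : Fin n) : frobeniusEuclideanEquiv m n X (i, j) = X i j :=
  rfl

theorem frobInner_eq_inner {m n : ℕ} (X Y : Matrix (Fin m) (Fin n) ℝ) :
    frobInner X Y = ⟪frobeniusEuclideanEquiv m n X, frobeniusEuclideanEquiv m n Y⟫ := by
  simp [frobInner, PiLp.inner_apply, Fintype.sum_prod_type, mul_comm]

theorem frobNorm_eq_norm {m n : ℕ} (X : Matrix (Fin m) (Fin n) ℝ) :
    frobNorm X = ‖frobeniusEuclideanEquiv m n X‖ := by
  rw [frobNorm, frobInner_eq_inner, real_inner_self_eq_norm_sq, Real.sqrt_sq (norm_nonneg _)]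

theorem rip_cross_subspace_bound_general {m n p k : ℕ}
    (δ : ℝ)
    (A : Matrix (Fin m) (Fin n) ℝ →ₗ[ℝ] EuclideanSpace ℝ (Fin p))
    (hRIP : ∀ X : Matrix (Fin m) (Fin n) ℝ, X.rank ≤ k →
      (1 - δ) * frobNorm X ^ 2 ≤ ‖A X‖ ^ 2 ∧ ‖A X‖ ^ 2 ≤ (1 + δ) * frobNorm X ^ 2)
    (Astar : EuclideanSpace ℝ (Fin p) →ₗ[ℝ] Matrix (Fin m) (Fin n) ℝ)
    (hadj : ∀ (X : Matrix (Fin m) (Fin n) ℝ) (v : EuclideanSpace ℝ (Fin p)),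
      (inner ℝ (A X) v : ℝ) = frobInner X (Astar v))
    (P₁ P₂ Q : Matrix (Fin m) (Fin n) ℝ →ₗ[ℝ] Matrix (Fin m) (Fin n) ℝ)
    (hP₁idem : ∀ X, P₁ (P₁ X) = P₁ X)
    (hP₁sa : ∀ X Y, frobInner (P₁ X) Y = frobInner X (P₁ Y))
    (hQP₁ : ∀ X, Q (P₁ X) = P₁ X)
    (hQP₂ : ∀ X, Q (P₂ X) = P₂ X)
    (hQrank : ∀ X, (Q X).rank ≤ k)
    (X : Matrix (Fin m) (Fin n) ℝ) (hX : P₂ X = X) :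
    frobNorm (P₁ (Astar (A (X - P₁ X)))) ≤ δ * frobNorm (X - P₁ X) := by
  set Z := X - P₁ X
  set T := Astar (A Z)
  have hRI : RestrictedIsometryOn (A ∘ₗ (frobeniusEuclideanEquiv m n).symm.toLinearMap)
      ((LinearMap.range Q).map (frobeniusEuclideanEquiv m n).toLinearMap) δ := by
    rintro _ ⟨_, ⟨W, rfl⟩, rfl⟩
    simpa [← frobNorm_eq_norm] using hRIP (Q W) (hQrank W)
  have hZ : Z ∈ LinearMap.range Q := ⟨Z, by rw [map_sub, hQP₁, ← hX, hQP₂, hX]⟩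
  have hY : P₁ T ∈ LinearMap.range Q := ⟨P₁ T, hQP₁ T⟩
  have hYZ : frobInner (P₁ T) Z = 0 := by
    rw [hP₁sa, map_sub, hP₁idem, sub_self]
    simp [frobInner]
  have hYY : ⟪A (P₁ T), A Z⟫ = frobInner (P₁ T) (P₁ T) := by
    rw [hadj, ← hP₁sa, hP₁idem]
  rw [frobNorm_eq_norm, frobNorm_eq_norm]
  refine hRI.norm_le_of_inner_eq_norm_sq (Submodule.mem_map_of_mem hY)
    (Submodule.mem_map_of_mem hZ) ?_ ?_
  · rwa [← frobInner_eq_inner]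
  · simpa [frobInner_eq_inner, real_inner_self_eq_norm_sq] using hYY

/-- Cross-subspace RIP bound: if `P₁`, `P₂` project onto `span(S₁)`, `span(S₂)` and
`Q` projects onto `span(S₁ ∪ S₂)` with `rank (Q X) ≤ k` for all `X`, then for
every `X ∈ span(S₂)`, `‖P₁ A* A P₁⊥ X‖_F ≤ δ_k ‖P₁⊥ X‖_F`. -/
theorem rip_cross_subspace_bound {m n p k : ℕ}
    (δ : ℝ)
    (A : Matrix (Fin m) (Fin n) ℝ →ₗ[ℝ] EuclideanSpace ℝ (Fin p))
    (hRIP : ∀ X : Matrix (Fin m) (Fin n) ℝ, X.rank ≤ k →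
      (1 - δ) * frobNorm X ^ 2 ≤ ‖A X‖ ^ 2 ∧ ‖A X‖ ^ 2 ≤ (1 + δ) * frobNorm X ^ 2)
    (Astar : EuclideanSpace ℝ (Fin p) →ₗ[ℝ] Matrix (Fin m) (Fin n) ℝ)
    (hadj : ∀ (X : Matrix (Fin m) (Fin n) ℝ) (v : EuclideanSpace ℝ (Fin p)),
      (inner ℝ (A X) v : ℝ) = frobInner X (Astar v))
    (P₁ P₂ Q : Matrix (Fin m) (Fin n) ℝ →ₗ[ℝ] Matrix (Fin m) (Fin n) ℝ)
    (hP₁idem : ∀ X, P₁ (P₁ X) = P₁ X)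
    (hP₁sa : ∀ X Y, frobInner (P₁ X) Y = frobInner X (P₁ Y))
    (hP₂idem : ∀ X, P₂ (P₂ X) = P₂ X)
    (hP₂sa : ∀ X Y, frobInner (P₂ X) Y = frobInner X (P₂ Y))
    (hQidem : ∀ X, Q (Q X) = Q X)
    (hQsa : ∀ X Y, frobInner (Q X) Y = frobInner X (Q Y))
    (hQP₁ : ∀ X, Q (P₁ X) = P₁ X)
    (hQP₂ : ∀ X, Q (P₂ X) = P₂ X)
    (hQrank : ∀ X, (Q X).rank ≤ k)
    (X : Matrix (Fin m) (Fin n) ℝ) (hX : P₂ X = X) :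
    frobNorm (P₁ (Astar (A (X - P₁ X)))) ≤ δ * frobNorm (X - P₁ X) :=
  rip_cross_subspace_bound_general δ A hRIP Astar hadj P₁ P₂ Q hP₁idem hP₁sa hQP₁ hQP₂ hQrank X hX
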